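/- arXiv:1309.6124 — 3 statements merged into one kernel-verified Lean document; each statement's English description precedes it below -/
import Mathlib

section
/- Let f and g be string-to-string functions with origin information over the same input alphabet A and output alphabet B. If f(v̄ | a | w̄) = g(v̄ | a | w̄) for all strings v, w ∈ List A and all letters a ∈ A, then f = g, i.e. f(w) = g(w) (the same output string with the same origins) for every input string w. In other words, a string-to-string function with origin information is uniquely determined by its characteristic function. -/
/-- Index of the part containing (0-based) position `i`, where `ls` is the list of
lengths of the parts of the input. Positions beyond all parts get index `ls.length`. -/
def partOf : List ℕ → ℕ → ℕ
  | [], _ => 0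
  | l :: ls, i => if i < l then 0 else partOf ls (i - l) + 1

/-- `f` is a string-to-string function with origin information: every origin occurring
in the output of `f` on `w` is a position of `w`. -/
def HasOrigins {A B : Type} (f : List A → List (B × ℕ)) : Prop :=
  ∀ w : List A, ∀ p ∈ f w, p.2 < w.length

/-- The blocks of the factored output of `f` for the factorization `parts` of the input:
each output letter of `f` on the concatenation of the parts is classified by the index of
the part containing its origin, maximal consecutive runs with the same classification are
grouped into blocks, and each block is recorded as its part index together with the string
of output letters it carries. -/
def blocksOf {A B : Type} (f : List A → List (B × ℕ)) (parts : List (List A)) :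
    List (ℕ × List B) :=
  (((f parts.flatten).map fun p => (partOf (parts.map List.length) p.2, p.1)).splitBy
    (fun x y => x.1 == y.1)).map fun blk => ((blk.map Prod.fst).headD 0, blk.map Prod.snd)

/-- The factored output of `f` for the factorization `parts`, where the contents of
blocks whose part index satisfies `erased` are erased (only the label is kept). -/
def factored {A B : Type} (f : List A → List (B × ℕ)) (parts : List (List A))
    (erased : ℕ → Bool) : List (ℕ × Option (List B)) :=
  (blocksOf f parts).map fun b => (b.1, if erased b.1 then none else some b.2)

/-- The left derivative `∂_v f`, i.e. `w ↦ f(v̄ | w)`. -/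
def leftDeriv {A B : Type} (f : List A → List (B × ℕ)) (v : List A) :
    List A → List (ℕ × Option (List B)) :=
  fun w => factored f [v, w] (· == 0)

/-- The right derivative `f∂_w`, i.e. `v ↦ f(v | w̄)`. -/
def rightDeriv {A B : Type} (f : List A → List (B × ℕ)) (w : List A) :
    List A → List (ℕ × Option (List B)) :=
  fun v => factored f [v, w] (· == 1)

/-- `f(v̄ | a | w̄)`: the factored output of `f(v·a·w)` for the split `(v, a, w)`
with the contents of the `v`-blocks and the `w`-blocks erased. -/
def charVal {A B : Type} (f : List A → List (B × ℕ)) (a : A) (v w : List A) :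
    List (ℕ × Option (List B)) :=
  factored f [v, [a], w] (fun k => !(k == 1))

/-- A language is regular if it is accepted by a DFA with finitely many states. -/
def IsRegularLang {A : Type} (L : Set (List A)) : Prop :=
  ∃ (Q : Type) (_ : Fintype Q) (M : DFA A Q), M.accepts = L

/-- A colouring of strings is regular if it has finite image and all its preimages
are regular languages. -/
def IsRegularColouring {A X : Type} (g : List A → X) : Prop :=
  (Set.range g).Finite ∧ ∀ x : X, IsRegularLang {w | g w = x}

/-- A colouring of pairs of strings is regular if it factors through a pair of
regular colourings of strings. -/
def IsRegularColouring₂ {A X : Type} (g : List A → List A → X) : Prop :=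
  ∃ (X₁ X₂ : Type) (g₁ : List A → X₁) (g₂ : List A → X₂),
    IsRegularColouring g₁ ∧ IsRegularColouring g₂ ∧
    ∀ v v' w w', g₁ v = g₁ v' → g₂ w = g₂ w' → g v w = g v' w'

/-- `listPow v i` is the `i`-fold concatenation `v^i`. -/
def listPow {A : Type} (v : List A) (i : ℕ) : List A := (List.replicate i v).flatten

/-! For a position `i` of `w`, the characteristic value at `i` determines the token sequence of
`f w` split around `i`: each run of output letters originating on the same side of `i` collapses to
a single token recording only that side, while each letter originating at `i` stays a token of its
own. Two outputs with the same token sequences for all splits agree, by comparing them left to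
right: after a common prefix whose last origin is `p`, the split at the median of `p` and the next
origins `o`, `o'` keeps both next letters as tokens of their own, and these tokens differ unless
`o = o'` and the letters coincide. -/

namespace List

variable {α : Type*}

theorem exists_splitBy_cons (r : α → α → Bool) (a : α) (l : List α) :
    ∃ g gs, (a :: l).splitBy r = (a :: g) :: gs := by
  obtain ⟨G, gs, hG⟩ := exists_cons_of_ne_nil (splitBy_ne_nil.2 (cons_ne_nil a l))
  obtain ⟨b, g, rfl⟩ := exists_cons_of_ne_nil (ne_nil_of_mem_splitBy (hG ▸ mem_cons_self))
  have hb := flatten_splitBy r (a :: l)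
  rw [hG, flatten_cons, cons_append, cons.injEq] at hb
  exact ⟨g, gs, hb.1 ▸ hG⟩

theorem splitBy_eq_map_singleton {r : α → α → Bool} {l : List α}
    (h : ∀ a ∈ l, ∀ b, r a b = false) : l.splitBy r = l.map ([·]) := by
  induction l with
  | nil => rfl
  | cons a l ih =>
    rw [← singleton_append, splitBy_append (by simp [h a mem_cons_self]),
      ih fun b hb => h b (mem_cons_of_mem a hb)]
    rfl

theorem splitBy_flatten_eq_flatMap {s : α → α → Bool} {gs : List (List α)} (hn : [] ∉ gs)
    (hc : gs.IsChain fun a b => ∃ ha hb, s (a.getLast ha) (b.head hb) = false) :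
    gs.flatten.splitBy s = gs.flatMap (splitBy s) := by
  induction gs with
  | nil => rfl
  | cons g gs ih =>
    rw [mem_cons, not_or] at hn
    rw [flatten_cons, flatMap_cons, ← ih hn.2 hc.tail]
    apply splitBy_append
    intro x hx y hy
    cases gs with
    | nil => simp at hy
    | cons g' gs =>
      obtain ⟨_, _, hs⟩ := hc.rel
      have hg'n : g' ≠ [] := fun h => hn.2 (h ▸ mem_cons_self)
      rw [← getLast_of_mem_getLast? hx]
      rw [flatten_cons, head?_append_of_ne_nil _ hg'n] at hy
      rw [← head_of_mem_head? hy]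
      exact hs

theorem splitBy_eq_flatMap_splitBy {r s : α → α → Bool} (hsr : ∀ a b, s a b → r a b)
    (l : List α) : l.splitBy s = (l.splitBy r).flatMap (splitBy s) := by
  conv_lhs => rw [← flatten_splitBy r l]
  refine splitBy_flatten_eq_flatMap (nil_notMem_splitBy r l)
    ((isChain_getLast_head_splitBy r l).imp fun a b ⟨ha, hb, h⟩ => ⟨ha, hb, ?_⟩)
  cases hs : s (a.getLast ha) (b.head hb)
  · rfl
  · simp [hsr _ _ hs] at h

theorem fst_eq_of_cons_mem_splitBy {β γ : Type*} [BEq β] [LawfulBEq β]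
    {m g : List (β × γ)} {a : β × γ} (hg : a :: g ∈ m.splitBy fun x y => x.1 == y.1)
    {y : β × γ} (hy : y ∈ a :: g) : y.1 = a.1 := by
  have hchain : ((a :: g).map Prod.fst).IsChain (· = ·) :=
    (isChain_map _).2 ((isChain_of_mem_splitBy hg).imp fun _ _ => eq_of_beq)
  rw [map_cons, isChain_cons_eq_iff_eq_replicate] at hchain
  rcases mem_cons.1 hy with rfl | hy
  · rfl
  · exact eq_of_mem_replicate (hchain ▸ mem_map_of_mem hy)

end List

section Tokens

variable {B : Type} (erased : ℕ → Bool)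

def sameErasedLabel (x y : ℕ × B) : Bool := x.1 == y.1 && erased x.1

def token (x : ℕ × B) : ℕ × Option B := (x.1, if erased x.1 then none else some x.2)

/-- One token per run of letters with the same erased label and one per letter with a visible
label; unlike `erasedBlocks`, this splits along every junction not inside an erased run. -/
def tokens (m : List (ℕ × B)) : List (ℕ × Option B) :=
  (m.splitBy (sameErasedLabel erased)).filterMap fun blk => blk.head?.map (token erased)

def erasedBlocks (m : List (ℕ × B)) : List (ℕ × Option (List B)) :=
  (m.splitBy fun x y => x.1 == y.1).map fun blk =>
    ((blk.map Prod.fst).headD 0,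
      if erased ((blk.map Prod.fst).headD 0) then none else some (blk.map Prod.snd))

def expandBlock : ℕ × Option (List B) → List (ℕ × Option B)
  | (k, none) => [(k, none)]
  | (k, some s) => s.map fun b => (k, some b)

theorem factored_eq_erasedBlocks {A : Type} (f : List A → List (B × ℕ))
    (parts : List (List A)) :
    factored f parts erased = erasedBlocks erased
      ((f parts.flatten).map fun p => (partOf (parts.map List.length) p.2, p.1)) := by
  simp only [factored, blocksOf, erasedBlocks, List.map_map]
  rfl

variable {erased}

theorem tokens_of_forall_fst_eq {g : List (ℕ × B)} (hg : g ≠ []) {c : ℕ}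
    (hc : ∀ x ∈ g, x.1 = c) :
    tokens erased g = expandBlock (c, if erased c then none else some (g.map Prod.snd)) := by
  cases hec : erased c
  · have hsplit : g.splitBy (sameErasedLabel erased) = g.map ([·]) :=
      List.splitBy_eq_map_singleton fun x hx y => by simp [sameErasedLabel, hc x hx, hec]
    rw [tokens, hsplit, List.filterMap_map]
    simp only [expandBlock, Bool.false_eq_true, if_false, List.map_map]
    rw [← List.filterMap_eq_map]
    refine List.filterMap_congr fun x hx => ?_
    simp [token, hc x hx, hec]
  · have hsplit : g.splitBy (sameErasedLabel erased) = [g] :=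
      List.splitBy_of_isChain hg (List.Pairwise.isChain (List.pairwise_of_forall_mem_list
        fun x hx y hy => by simp [sameErasedLabel, hc x hx, hc y hy, hec]))
    obtain ⟨a, g, rfl⟩ := List.exists_cons_of_ne_nil hg
    simp [tokens, hsplit, token, expandBlock, hc a List.mem_cons_self, hec]

theorem tokens_eq_flatMap_expandBlock (m : List (ℕ × B)) :
    tokens erased m = (erasedBlocks erased m).flatMap expandBlock := by
  rw [tokens, List.splitBy_eq_flatMap_splitBy (r := fun x y => x.1 == y.1),
    List.filterMap_flatMap, erasedBlocks, List.flatMap_map]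
  · apply List.flatMap_congr
    intro g hg
    obtain ⟨a, g, rfl⟩ := List.exists_cons_of_ne_nil (List.ne_nil_of_mem_splitBy hg)
    exact tokens_of_forall_fst_eq (List.cons_ne_nil a g) fun y hy =>
      List.fst_eq_of_cons_mem_splitBy hg hy
  · intro a b h
    simp only [sameErasedLabel, Bool.and_eq_true] at h
    exact h.1

theorem tokens_append {m m' : List (ℕ × B)}
    (h : ∀ x ∈ m.getLast?, ∀ y ∈ m'.head?, sameErasedLabel erased x y = false) :
    tokens erased (m ++ m') = tokens erased m ++ tokens erased m' := by
  rw [tokens, List.splitBy_append h, List.filterMap_append]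
  rfl

theorem exists_tokens_cons (x : ℕ × B) (m : List (ℕ × B)) :
    ∃ t, tokens erased (x :: m) = token erased x :: t := by
  obtain ⟨g, gs, h⟩ := List.exists_splitBy_cons (sameErasedLabel erased) x m
  exact ⟨_, by rw [tokens, h, List.filterMap_cons_some (by rfl)]⟩

end Tokens

section Origins

variable {B : Type}

def side (i o : ℕ) : ℕ := if o < i then 0 else if o = i then 1 else 2

theorem side_eq_one_iff {i o : ℕ} : side i o = 1 ↔ o = i := by
  unfold side; split_ifs <;> simp <;> omega

theorem partOf_eq_side {i k o : ℕ} (ho : o < i + 1 + k) : partOf [i, 1, k] o = side i o := by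
  simp only [partOf, side]; split_ifs <;> omega

/-- The junction between origins `p` and `o` survives in the tokens of the split around `i`. -/
def Separates (i p o : ℕ) : Prop := o = i ∨ side i p ≠ side i o

theorem exists_separates (prev : Option ℕ) (o o' : ℕ) :
    ∃ i, (i = o ∨ i = o' ∨ i ∈ prev) ∧ (∀ p ∈ prev, Separates i p o ∧ Separates i p o') ∧
      (side i o = side i o' → o = i ∧ o' = i) := by
  cases prev with
  | none =>
    exact ⟨o, Or.inl rfl, by simp, fun h => ⟨rfl, side_eq_one_iff.1 (h ▸ side_eq_one_iff.2 rfl)⟩⟩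
  | some p =>
    -- the median of `o`, `o'` and `p` works
    simp only [Option.mem_def, Option.some.injEq, forall_eq', Separates, side]
    rcases le_total o o' with h₁ | h₁ <;> rcases le_total p o with h₂ | h₂ <;>
      rcases le_total p o' with h₃ | h₃ <;>
      first
        | (refine ⟨o, ?_⟩; split_ifs <;> simp <;> omega)
        | (refine ⟨o', ?_⟩; split_ifs <;> simp <;> omega)
        | (refine ⟨p, ?_⟩; split_ifs <;> simp <;> omega)

def sideTokens (i : ℕ) (L : List (B × ℕ)) : List (ℕ × Option B) :=
  tokens (fun k => !(k == 1)) (L.map fun p => (side i p.2, p.1))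

theorem sideTokens_eq_flatMap_charVal {A : Type} {f : List A → List (B × ℕ)}
    (hf : HasOrigins f) {w : List A} {i : ℕ} (hi : i < w.length) :
    sideTokens i (f w) = (charVal f w[i] (w.take i) (w.drop (i + 1))).flatMap expandBlock := by
  have hflat : [w.take i, [w[i]], w.drop (i + 1)].flatten = w := by
    simp [← List.drop_eq_getElem_cons hi]
  have hlens :
      [w.take i, [w[i]], w.drop (i + 1)].map List.length = [i, 1, w.length - (i + 1)] := by
    simp [Nat.min_eq_left hi.le]
  rw [charVal, factored_eq_erasedBlocks, ← tokens_eq_flatMap_expandBlock, hflat, hlens,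
    sideTokens]
  congr 1
  exact List.map_congr_left fun p hp => by rw [partOf_eq_side (by have := hf w p hp; omega)]

theorem sideTokens_append_cons {i : ℕ} {P : List (B × ℕ)} {y : B × ℕ}
    (hy : ∀ q ∈ P.getLast?, Separates i q.2 y.2) (R : List (B × ℕ)) :
    ∃ t, sideTokens i (P ++ y :: R) =
      sideTokens i P ++ token (fun k => !(k == 1)) (side i y.2, y.1) :: t := by
  obtain ⟨t, ht⟩ := exists_tokens_cons (erased := fun k => !(k == 1)) (side i y.2, y.1)
    (R.map fun p => (side i p.2, p.1))
  refine ⟨t, ?_⟩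
  rw [sideTokens, List.map_append, List.map_cons, tokens_append, ht, sideTokens]
  intro x hx z hz
  rw [List.getLast?_map, Option.mem_map] at hx
  obtain ⟨q, hq, rfl⟩ := hx
  obtain rfl : z = (side i y.2, y.1) := by simpa using hz.symm
  rcases hy q hq with h | h
  · simp [sameErasedLabel, side_eq_one_iff.2 h]
  · simp [sameErasedLabel, h]

theorem sideTokens_append_cons_ne (P : List (B × ℕ)) (y : B × ℕ) (R : List (B × ℕ)) :
    sideTokens y.2 (P ++ y :: R) ≠ sideTokens y.2 P := by
  obtain ⟨t, ht⟩ := sideTokens_append_cons (fun _ _ => Or.inl rfl) (P := P) (y := y) R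
  intro h
  simpa [ht] using congrArg List.length h

theorem eq_of_sideTokens_append_cons_eq {n : ℕ} {P R R' : List (B × ℕ)} {x x' : B × ℕ}
    (hP : ∀ q ∈ P, q.2 < n) (hx : x.2 < n) (hx' : x'.2 < n)
    (h : ∀ i < n, sideTokens i (P ++ x :: R) = sideTokens i (P ++ x' :: R')) : x = x' := by
  obtain ⟨i, hi, hsep, hside⟩ := exists_separates (P.getLast?.map Prod.snd) x.2 x'.2
  have hin : i < n := by
    rcases hi with rfl | rfl | hi
    · exact hx
    · exact hx'
    · obtain ⟨q, hq, rfl⟩ := Option.mem_map.1 hi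
      exact hP q (List.mem_of_getLast? hq)
  have hsep' : ∀ q ∈ P.getLast?, Separates i q.2 x.2 ∧ Separates i q.2 x'.2 :=
    fun q hq => hsep q.2 (Option.mem_map_of_mem _ hq)
  obtain ⟨t, ht⟩ := sideTokens_append_cons (fun q hq => (hsep' q hq).1) R
  obtain ⟨t', ht'⟩ := sideTokens_append_cons (fun q hq => (hsep' q hq).2) R'
  have htok := h i hin
  rw [ht, ht', List.append_cancel_left_eq, List.cons.injEq] at htok
  obtain ⟨hso, hletter⟩ := Prod.mk.inj htok.1
  obtain ⟨ho, ho'⟩ := hside hso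
  have hone : side i x.2 = 1 := side_eq_one_iff.2 ho
  rw [← hso, hone] at hletter
  exact Prod.ext (by simpa using hletter) (ho.trans ho'.symm)

theorem eq_of_sideTokens_append_eq {n : ℕ} {P R R' : List (B × ℕ)}
    (hR : ∀ q ∈ P ++ R, q.2 < n) (hR' : ∀ q ∈ P ++ R', q.2 < n)
    (h : ∀ i < n, sideTokens i (P ++ R) = sideTokens i (P ++ R')) : R = R' := by
  induction R generalizing P R' with
  | nil =>
    cases R' with
    | nil => rfl
    | cons x' R' =>
      exact absurd (h x'.2 (hR' x' (by simp))).symm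
        (by simpa using sideTokens_append_cons_ne P x' R')
  | cons x R ih =>
    cases R' with
    | nil =>
      exact absurd (h x.2 (hR x (by simp))) (by simpa using sideTokens_append_cons_ne P x R)
    | cons x' R' =>
      obtain rfl : x = x' := eq_of_sideTokens_append_cons_eq (fun q hq => hR q (by simp [hq]))
        (hR x (by simp)) (hR' x' (by simp)) h
      congr 1
      exact ih (P := P ++ [x]) (by simpa using hR) (by simpa using hR') (by simpa using h)

theorem eq_of_forall_sideTokens_eq {n : ℕ} {L L' : List (B × ℕ)} (hL : ∀ q ∈ L, q.2 < n)
    (hL' : ∀ q ∈ L', q.2 < n) (h : ∀ i < n, sideTokens i L = sideTokens i L') : L = L' :=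
  eq_of_sideTokens_append_eq (P := []) hL hL' h

end Origins

/-- A string-to-string function with origin information is uniquely determined by its
characteristic function `(v, a, w) ↦ f(v̄ | a | w̄)`. -/
theorem determined_by_characteristic {A B : Type}
    (f g : List A → List (B × ℕ)) (hf : HasOrigins f) (hg : HasOrigins g)
    (h : ∀ (a : A) (v w : List A), charVal f a v w = charVal g a v w) :
    ∀ w : List A, f w = g w := by
  intro w
  refine eq_of_forall_sideTokens_eq (hf w) (hg w) fun i hi => ?_
  rw [sideTokens_eq_flatMap_charVal hf hi, sideTokens_eq_flatMap_charVal hg hi, h]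
end

section
/- Over the one-letter input and output alphabet A = B = {a}, let g be the string-to-string function with origin information defined as follows: g(ε) = ε, and on an input of length n ≥ 1, g outputs, in increasing order of position, the letters at those 1-based positions i with i ≤ n − 1 such that i is a prime number (each such output letter having origin its own position), followed by the last input letter with origin the last position. Then g has only finitely many right derivatives, but infinitely many left derivatives. (Example 5; this shows that finitely many derivatives on one side alone does not imply finitely many on the other side.) -/
/-- Example 5: on a nonempty input of length `n`, output the letters at 1-based prime
positions `i ≤ n - 1` (each with origin its own position), followed by the last input
letter with origin the last position. -/
def primeExample : List Unit → List (Unit × ℕ) := fun w =>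
  if w.length = 0 then []
  else
    ((List.range (w.length - 1)).filterMap fun j =>
        if Nat.Prime (j + 1) then some ((), j) else none) ++ [((), w.length - 1)]


section PrimeExampleAux

lemma loop_rep {α : Type} (R : α → α → Bool) (x : α) (hx : R x x = true) :
    ∀ (a : ℕ) (rest g : List α) (gs : List (List α)),
      List.splitBy.loop R (List.replicate a x ++ rest) x g gs =
        List.splitBy.loop R rest x (List.replicate a x ++ g) gs := by
  intro a
  induction a with
  | zero => intro rest g gs; rfl
  | succ a ih =>
    intro rest g gs
    rw [List.replicate_succ, List.cons_append, List.splitBy.loop, hx, ih]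
    have h : List.replicate a x ++ x :: g = x :: List.replicate a x ++ g := by
      rw [List.append_cons, ← List.replicate_succ', List.replicate_succ, List.cons_append]
    rw [h]

lemma splitBy_rep_rep {α : Type} (R : α → α → Bool) (x y : α)
    (hx : R x x = true) (hy : R y y = true) (hxy : R x y = false) (a b : ℕ) :
    List.splitBy R (List.replicate a x ++ List.replicate b y) =
      (if a = 0 then [] else [List.replicate a x]) ++
        (if b = 0 then [] else [List.replicate b y]) := by
  cases a with
  | zero =>
    cases b with
    | zero => rfl
    | succ b =>
      simp only [List.replicate_zero, List.nil_append, List.replicate_succ, List.splitBy,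
        if_neg (Nat.succ_ne_zero b)]
      have h := loop_rep R y hy b [] [] []
      rw [List.append_nil] at h
      rw [h]
      simp [List.splitBy.loop, ← List.replicate_succ', List.replicate_succ]
  | succ a =>
    rw [List.replicate_succ, List.cons_append, List.splitBy]
    rw [loop_rep R x hx a (List.replicate b y) [] []]
    cases b with
    | zero =>
      simp [List.splitBy.loop, ← List.replicate_succ', List.replicate_succ]
    | succ b =>
      rw [List.replicate_succ, List.splitBy.loop, hxy]
      have h := loop_rep R y hy b [] [] [(x :: (List.replicate a x ++ [])).reverse]
      rw [List.append_nil] at h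
      rw [h]
      simp [List.splitBy.loop, ← List.replicate_succ', List.replicate_succ]

lemma filterMap_if_const {α β : Type} (p : α → Bool) (c : β) (l : List α) :
    l.filterMap (fun a => if p a then some c else none) =
      List.replicate (l.countP p) c := by
  induction l with
  | nil => rfl
  | cons hd tl ih =>
    rw [List.filterMap_cons, List.countP_cons]
    cases h : p hd <;> simp [h, ih, List.replicate_succ]

/-- number of primes `≤ n` -/
def pc (n : ℕ) : ℕ := (List.range n).countP (fun j => decide (Nat.Prime (j + 1)))

lemma pc_add (n k : ℕ) :
    pc (n + k) = pc n + (List.range k).countP (fun i => decide (Nat.Prime (n + i + 1))) := by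
  unfold pc
  rw [List.range_add, List.countP_append, List.countP_map]
  rfl

lemma pc_mono {a b : ℕ} (h : a ≤ b) : pc a ≤ pc b := by
  obtain ⟨k, rfl⟩ := Nat.le.dest h
  rw [pc_add]; omega

lemma M_eq (n₁ n₂ : ℕ) (hn₂ : n₂ ≠ 0) :
    (primeExample (List.replicate n₁ () ++ List.replicate n₂ ())).map
        (fun p => (partOf [n₁, n₂] p.2, p.1)) =
      List.replicate (pc n₁) ((0 : ℕ), ()) ++
        List.replicate (pc (n₁ + n₂ - 1) - pc n₁ + 1) ((1 : ℕ), ()) := by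
  have hlen : (List.replicate n₁ () ++ List.replicate n₂ ()).length = n₁ + n₂ := by simp
  have hne : n₁ + n₂ ≠ 0 := by omega
  unfold primeExample
  rw [hlen, if_neg hne]
  have hsub : n₁ + n₂ - 1 = n₁ + (n₂ - 1) := by omega
  rw [List.map_append, List.map_filterMap, hsub, List.range_add, List.filterMap_append,
    List.filterMap_map]
  have h1 : (List.range n₁).filterMap
      (fun j => Option.map (fun p => (partOf [n₁, n₂] p.2, p.1))
        (if Nat.Prime (j + 1) then some ((), j) else none)) =
      List.replicate (pc n₁) ((0 : ℕ), ()) := by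
    rw [List.filterMap_congr (g := fun j =>
        if (decide (Nat.Prime (j + 1)) : Bool) then some (((0 : ℕ), ())) else none)]
    · rw [filterMap_if_const]; rfl
    · intro j hj
      rw [List.mem_range] at hj
      by_cases hp : Nat.Prime (j + 1) <;>
        simp [hp, partOf, hj]
  have h2 : (List.range (n₂ - 1)).filterMap
      ((fun j => Option.map (fun p => (partOf [n₁, n₂] p.2, p.1))
        (if Nat.Prime (j + 1) then some ((), j) else none)) ∘ (fun x => n₁ + x)) =
      List.replicate (pc (n₁ + (n₂ - 1)) - pc n₁) ((1 : ℕ), ()) := by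
    rw [List.filterMap_congr (g := fun i =>
        if (decide (Nat.Prime (n₁ + i + 1)) : Bool) then some (((1 : ℕ), ())) else none)]
    · rw [filterMap_if_const]
      congr 1
      have := pc_add n₁ (n₂ - 1)
      omega
    · intro i hi
      rw [List.mem_range] at hi
      by_cases hp : Nat.Prime (n₁ + i + 1) <;>
        simp [hp, partOf, Function.comp, show ¬ (n₁ + i < n₁) by omega,
          show n₁ + i - n₁ = i by omega, show i < n₂ by omega]
  rw [h1, h2]
  have h3 : partOf [n₁, n₂] (n₁ + (n₂ - 1)) = 1 := by
    simp [partOf, hn₂, show ¬ (n₁ + (n₂ - 1) < n₁) by omega,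
      show n₁ + (n₂ - 1) - n₁ < n₂ by omega]
  show _ ++ _ ++ [(partOf [n₁, n₂] (n₁ + (n₂ - 1)), ())] = _
  rw [h3, List.append_assoc, ← List.replicate_succ']

lemma M_eq0 (n₁ : ℕ) (h : n₁ ≠ 0) :
    (primeExample (List.replicate n₁ () ++ List.replicate 0 ())).map
        (fun p => (partOf [n₁, 0] p.2, p.1)) =
      List.replicate (pc (n₁ - 1) + 1) ((0 : ℕ), ()) := by
  have hlen : (List.replicate n₁ () ++ List.replicate 0 ()).length = n₁ := by simp
  unfold primeExample
  rw [hlen, if_neg h]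
  rw [List.map_append, List.map_filterMap]
  have h1 : (List.range (n₁ - 1)).filterMap
      (fun j => Option.map (fun p => (partOf [n₁, 0] p.2, p.1))
        (if Nat.Prime (j + 1) then some ((), j) else none)) =
      List.replicate (pc (n₁ - 1)) ((0 : ℕ), ()) := by
    rw [List.filterMap_congr (g := fun j =>
        if (decide (Nat.Prime (j + 1)) : Bool) then some (((0 : ℕ), ())) else none)]
    · rw [filterMap_if_const]; rfl
    · intro j hj
      rw [List.mem_range] at hj
      by_cases hp : Nat.Prime (j + 1) <;>
        simp [hp, partOf, show j < n₁ by omega]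
  rw [h1]
  have h3 : partOf [n₁, 0] (n₁ - 1) = 0 := by
    simp [partOf, show n₁ - 1 < n₁ by omega]
  show _ ++ [(partOf [n₁, 0] (n₁ - 1), ())] = _
  rw [h3, ← List.replicate_succ']

lemma factored_eq (n₁ n₂ : ℕ) (hn₂ : n₂ ≠ 0) (er : ℕ → Bool) :
    factored primeExample [List.replicate n₁ (), List.replicate n₂ ()] er =
      (if pc n₁ = 0 then []
        else [((0 : ℕ), if er 0 then none else some (List.replicate (pc n₁) ()))]) ++
      [((1 : ℕ), if er 1 then none
        else some (List.replicate (pc (n₁ + n₂ - 1) - pc n₁ + 1) ()))] := by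
  unfold factored blocksOf
  have hfl : ([List.replicate n₁ (), List.replicate n₂ ()] : List (List Unit)).flatten =
      List.replicate n₁ () ++ List.replicate n₂ () := by simp
  have hml : ([List.replicate n₁ (), List.replicate n₂ ()] : List (List Unit)).map
      List.length = [n₁, n₂] := by simp
  rw [hfl, hml, M_eq n₁ n₂ hn₂,
    splitBy_rep_rep _ ((0:ℕ), ()) ((1:ℕ), ()) rfl rfl rfl]
  by_cases h : pc n₁ = 0 <;>
    simp [h, List.map_replicate, List.head?_replicate]

lemma factored_eq0 (n₁ : ℕ) (h : n₁ ≠ 0) (er : ℕ → Bool) :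
    factored primeExample [List.replicate n₁ (), ([] : List Unit)] er =
      [((0 : ℕ), if er 0 then none else some (List.replicate (pc (n₁ - 1) + 1) ()))] := by
  unfold factored blocksOf
  have hfl : ([List.replicate n₁ (), []] : List (List Unit)).flatten =
      List.replicate n₁ () ++ List.replicate 0 () := by simp
  have hml : ([List.replicate n₁ (), []] : List (List Unit)).map List.length = [n₁, 0] := by simp
  rw [hfl, hml, M_eq0 n₁ h]
  have hs := splitBy_rep_rep (fun x y : ℕ × Unit => x.1 == y.1) ((0:ℕ), ()) ((1:ℕ), ())
    rfl rfl rfl (pc (n₁ - 1) + 1) 0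
  rw [List.replicate_zero, List.append_nil] at hs
  rw [hs]
  simp [List.map_replicate, List.head?_replicate]

lemma eq_rep (w : List Unit) : w = List.replicate w.length () :=
  List.eq_replicate_length.2 fun _ _ => rfl

lemma key_left (n n' : ℕ) (hlt : n < n')
    (heq : leftDeriv primeExample (List.replicate n ()) =
      leftDeriv primeExample (List.replicate n' ())) : False := by
  have hB : ∀ m : ℕ, m ≠ 0 →
      pc (n + m - 1) - pc n = pc (n' + m - 1) - pc n' := by
    intro m hm
    have h1 := congrFun heq (List.replicate m ())
    unfold leftDeriv at h1
    rw [factored_eq n m hm (· == 0), factored_eq n' m hm (· == 0)] at h1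
    have h2 := congrArg List.getLast? h1
    rw [List.getLast?_concat, List.getLast?_concat] at h2
    simp only [Option.some.injEq, Prod.mk.injEq, show ((1 : ℕ) == 0) = false from rfl,
      Bool.false_eq_true, if_false] at h2
    have h3 := congrArg List.length h2.2
    simp only [List.length_replicate] at h3
    omega
  have key2 : ∀ k, n ≤ k → pc (k + (n' - n)) = pc k + (pc n' - pc n) := by
    intro k hk
    have hm := hB (k - n + 1) (by omega)
    have e1 : n + (k - n + 1) - 1 = k := by omega
    have e2 : n' + (k - n + 1) - 1 = k + (n' - n) := by omega
    rw [e1, e2] at hm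
    have m1 := pc_mono (show n ≤ k by omega)
    have m2 := pc_mono (show n' ≤ k + (n' - n) by omega)
    have m3 := pc_mono (show n ≤ n' from le_of_lt hlt)
    have m4 := pc_mono (show k ≤ k + (n' - n) by omega)
    omega
  rcases eq_or_ne (pc n' - pc n) 0 with hc | hc
  · obtain ⟨p, hp1, hp2⟩ := Nat.exists_infinite_primes (n' + 1)
    have hk := key2 (p - 1) (by omega)
    have hp2' := hp2.two_le
    have hpeq : p - 1 + 1 = p := by omega
    have hpc : pc p = pc (p - 1) + 1 := by
      have hadd := pc_add (p - 1) 1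
      rw [hpeq] at hadd
      rw [hadd]
      simp [List.range_succ, hpeq, hp2]
    have hm := pc_mono (show p ≤ p - 1 + (n' - n) by omega)
    omega
  · set N := (n + (n' - n) + 1).factorial with hNdef
    have hN : 1 ≤ N := (n + (n' - n) + 1).factorial_pos
    have hNn : n ≤ N + 1 := by
      have := Nat.self_le_factorial (n + (n' - n) + 1); omega
    have hk := key2 (N + 1) hNn
    have hz : (List.range (n' - n)).countP
        (fun i => decide (Nat.Prime (N + 1 + i + 1))) = 0 := by
      rw [List.countP_eq_zero]
      intro i hi
      rw [List.mem_range] at hi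
      simp only [decide_eq_true_eq]
      intro hp
      have hdvd : (i + 2) ∣ (N + 1 + i + 1) := by
        have hd1 : (i + 2) ∣ N := Nat.dvd_factorial (by omega) (by omega)
        have he : N + 1 + i + 1 = N + (i + 2) := by omega
        rw [he]
        exact Nat.dvd_add hd1 dvd_rfl
      rcases hp.eq_one_or_self_of_dvd (i + 2) hdvd with h | h <;> omega
    have hadd := pc_add (N + 1) (n' - n)
    omega

end PrimeExampleAux

/-- Example 5: `primeExample` has finitely many right derivatives but infinitely many
left derivatives. -/
theorem primeExample_derivatives :
    (Set.range (rightDeriv primeExample)).Finite ∧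
      ¬ (Set.range (leftDeriv primeExample)).Finite := by
  constructor
  · -- finitely many right derivatives
    have hsub : Set.range (rightDeriv primeExample) ⊆
        {rightDeriv primeExample [], rightDeriv primeExample [()]} := by
      rintro _ ⟨w, rfl⟩
      rcases eq_or_ne w.length 0 with h | h
      · rw [List.length_eq_zero_iff.1 h]
        exact Set.mem_insert _ _
      · right
        show rightDeriv primeExample w = rightDeriv primeExample [()]
        funext v
        unfold rightDeriv
        rw [eq_rep w, eq_rep v,
          show ([()] : List Unit) = List.replicate 1 () from rfl,
          factored_eq v.length w.length h (· == 1),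
          factored_eq v.length 1 one_ne_zero (· == 1)]
        simp
    exact (Set.Finite.insert _ (Set.finite_singleton _)).subset hsub
  · -- infinitely many left derivatives
    intro hfin
    set F : ℕ → (List Unit → List (ℕ × Option (List Unit))) :=
      fun n => leftDeriv primeExample (List.replicate n ()) with hF
    have hFfin : (Set.range F).Finite := by
      refine hfin.subset ?_
      rintro _ ⟨n, rfl⟩
      exact ⟨List.replicate n (), rfl⟩
    have : Finite (Set.range F) := hFfin.to_subtype
    obtain ⟨n, n', hne, heq⟩ :=
      Finite.exists_ne_map_eq_of_infinite (Set.rangeFactorization F)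
    have hFeq : F n = F n' := congrArg Subtype.val heq
    rcases hne.lt_or_gt with hlt | hlt
    · exact key_left n n' hlt hFeq
    · exact key_left n' n hlt hFeq.symm
end

section
/- Let f be a string-to-string function with origin information. The following are equivalent: (1) for every input string w, the origin map of f(w) is order-preserving, i.e. whenever an output position precedes another output position, the origin of the first is less than or equal to the origin of the second; (2) for all input strings v, w, the sequence of block labels of the fully erased factored output f(v̄ | w̄) is one of: the empty sequence, [left], [right], or [left, right] (i.e. it belongs to (ε + left)(ε + right)). (Theorem 4, equivalence of items 1 and 2.) -/
/-!
Classify each output letter of `f (v ++ w)` by the part (`0` for `v`, `1` for `w`) containing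
its origin. The blocks are the maximal runs of this classification, so the block labels lie in
`(ε + 0)(ε + 1)` iff they increase strictly, iff the classification is monotone along the output.
Sorted origins give a monotone classification; conversely, adjacent output letters with origins
`o > o'` are separated by cutting the input just before position `o`.
-/

open List

theorem partOf_mono (ls : List ℕ) : Monotone (partOf ls) := by
  induction ls with
  | nil => exact monotone_const
  | cons l ls ih =>
    intro i j hij
    simp only [partOf]
    split_ifs <;> first | omega | exact Nat.succ_le_succ (ih (by omega))

theorem partOf_lt_length {ls : List ℕ} {i : ℕ} (h : i < ls.sum) : partOf ls i < ls.length := by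
  induction ls generalizing i with
  | nil => simp at h
  | cons l ls ih =>
    simp only [partOf, length_cons, sum_cons] at h ⊢
    split_ifs
    · omega
    · have := ih (i := i - l) (by omega)
      omega

theorem partOf_length_take_drop {α : Type*} {w : List α} {i : ℕ} (h : i < w.length) (c : ℕ) :
    partOf [(w.take c).length, (w.drop c).length] i = if i < c then 0 else 1 := by
  simp only [partOf, length_take, length_drop]
  split_ifs <;> omega

section BlockLabels

variable {β : Type*}

def blockLabels (l : List (ℕ × β)) : List ℕ :=
  (l.splitBy fun x y => x.1 == y.1).map fun blk => (blk.map Prod.fst).headD 0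

variable {l : List (ℕ × β)}

theorem map_fst_eq_replicate_of_mem_splitBy {blk : List (ℕ × β)}
    (h : blk ∈ l.splitBy fun x y => x.1 == y.1) :
    blk.map Prod.fst = replicate blk.length ((blk.map Prod.fst).headD 0) := by
  have hchain : (blk.map Prod.fst).IsChain (· = ·) :=
    (isChain_map _).mpr ((isChain_of_mem_splitBy h).imp fun _ _ => by simp)
  obtain ⟨p, t, rfl⟩ := exists_cons_of_ne_nil (ne_nil_of_mem_splitBy h)
  simpa using isChain_eq_iff_eq_replicate.mp hchain

theorem fst_eq_of_mem_splitBy {blk : List (ℕ × β)} (h : blk ∈ l.splitBy fun x y => x.1 == y.1)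
    {p : ℕ × β} (hp : p ∈ blk) : p.1 = (blk.map Prod.fst).headD 0 :=
  eq_of_mem_replicate (map_fst_eq_replicate_of_mem_splitBy h ▸ mem_map_of_mem hp)

theorem blockLabels_subset : blockLabels l ⊆ l.map Prod.fst := by
  intro k hk
  obtain ⟨blk, hblk, rfl⟩ := mem_map.mp hk
  obtain ⟨p, t, rfl⟩ := exists_cons_of_ne_nil (ne_nil_of_mem_splitBy hblk)
  refine mem_map.mpr ⟨p, ?_, rfl⟩
  rw [← flatten_splitBy (fun x y : ℕ × β => x.1 == y.1) l]
  exact mem_flatten.mpr ⟨_, hblk, mem_cons_self⟩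

theorem isChain_ne_blockLabels : (blockLabels l).IsChain (· ≠ ·) := by
  rw [blockLabels, isChain_map]
  refine (isChain_getLast_head_splitBy _ l).imp_of_mem_imp ?_
  rintro a b ha hb ⟨hna, hnb, hab⟩
  rw [← fst_eq_of_mem_splitBy ha (getLast_mem hna), ← fst_eq_of_mem_splitBy hb (head_mem hnb)]
  simpa using hab

theorem isChain_map_fst_iff_isChain_blockLabels {R : ℕ → ℕ → Prop} (hR : ∀ a, R a a) :
    (l.map Prod.fst).IsChain R ↔ (blockLabels l).IsChain R := by
  set bs := l.splitBy fun x y => x.1 == y.1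
  have hnil : [] ∉ bs.map (map Prod.fst) := by
    simp only [mem_map, map_eq_nil_iff, exists_eq_right]
    exact nil_notMem_splitBy _ l
  conv_lhs => rw [← flatten_splitBy (fun x y : ℕ × β => x.1 == y.1) l, map_flatten,
    isChain_flatten hnil]
  rw [blockLabels, isChain_map, isChain_map]
  refine (and_iff_right ?_).trans (IsChain.iff_of_mem_imp fun a b ha hb => ?_)
  · simp only [mem_map, forall_exists_index, and_imp, forall_apply_eq_imp_iff₂]
    intro blk hblk
    rw [map_fst_eq_replicate_of_mem_splitBy hblk]
    exact isChain_replicate_of_rel _ (hR _)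
  · rw [map_fst_eq_replicate_of_mem_splitBy ha, map_fst_eq_replicate_of_mem_splitBy hb]
    simp [head?_replicate, getLast?_replicate, ne_nil_of_mem_splitBy ha, ne_nil_of_mem_splitBy hb]

theorem isChain_lt_blockLabels_iff :
    (blockLabels l).IsChain (· < ·) ↔ (l.map Prod.fst).IsChain (· ≤ ·) := by
  rw [isChain_map_fst_iff_isChain_blockLabels fun _ => le_rfl]
  refine ⟨fun h => h.imp fun _ _ => le_of_lt, fun h => ?_⟩
  have hne := isChain_iff_getElem.mp (isChain_ne_blockLabels (l := l))
  exact isChain_iff_getElem.mpr fun i hi => lt_of_le_of_ne (h.getElem i hi) (hne i hi)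

end BlockLabels

theorem isChain_lt_iff_mem_of_forall_lt_two {xs : List ℕ} (h : ∀ x ∈ xs, x < 2) :
    xs.IsChain (· < ·) ↔ xs ∈ ({[], [0], [1], [0, 1]} : Set (List ℕ)) := by
  rcases xs with _ | ⟨a, _ | ⟨b, _ | ⟨c, t⟩⟩⟩ <;>
    simp [isChain_cons_cons] at h ⊢ <;> omega

theorem isChain_le_of_forall_isChain_le_threshold {os : List ℕ}
    (h : ∀ c, (os.map fun o => if o < c then 0 else 1).IsChain (· ≤ ·)) :
    os.IsChain (· ≤ ·) := by
  rw [isChain_iff_getElem]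
  intro i hi
  by_contra hlt
  have hstep := (h os[i]).getElem i (by simpa using hi)
  simp only [getElem_map, lt_irrefl, if_false] at hstep
  split_ifs at hstep <;> omega

theorem blocksOf_pair_map_fst {A B : Type} (f : List A → List (B × ℕ)) (v w : List A) :
    (blocksOf f [v, w]).map Prod.fst =
      blockLabels ((f (v ++ w)).map fun p => (partOf [v.length, w.length] p.2, p.1)) := by
  simp [blocksOf, blockLabels, Function.comp_def]

theorem lt_two_of_mem_blocksOf_pair_map_fst {A B : Type} {f : List A → List (B × ℕ)}
    (hf : HasOrigins f) (v w : List A) : ∀ k ∈ (blocksOf f [v, w]).map Prod.fst, k < 2 := by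
  rw [blocksOf_pair_map_fst]
  intro k hk
  obtain ⟨p, hp, rfl⟩ := mem_map.mp (blockLabels_subset hk)
  obtain ⟨q, hq, rfl⟩ := mem_map.mp hp
  exact partOf_lt_length (by simpa using hf _ q hq)

/-- Theorem 4 (items 1 ↔ 2): the origin map of `f` is order-preserving on every input
iff for all `v, w` the sequence of block labels of the fully erased factored output
`f(v̄ | w̄)` belongs to `(ε + left)(ε + right)`. -/
theorem order_preserving_iff_blocks {A B : Type}
    (f : List A → List (B × ℕ)) (hf : HasOrigins f) :
    (∀ w : List A, List.Pairwise (· ≤ ·) ((f w).map Prod.snd)) ↔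
      ∀ v w : List A, (blocksOf f [v, w]).map Prod.fst ∈
        ({[], [0], [1], [0, 1]} : Set (List ℕ)) := by
  simp_rw [← isChain_lt_iff_mem_of_forall_lt_two (lt_two_of_mem_blocksOf_pair_map_fst hf _ _),
    blocksOf_pair_map_fst, isChain_lt_blockLabels_iff, map_map, ← isChain_iff_pairwise]
  constructor
  · intro hsorted v w
    have hchain := hsorted (v ++ w)
    rw [isChain_map] at hchain ⊢
    exact hchain.imp fun _ _ h => partOf_mono _ h
  · intro hblocks w
    refine isChain_le_of_forall_isChain_le_threshold fun c => ?_
    have hsplit := hblocks (w.take c) (w.drop c)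
    rw [take_append_drop] at hsplit
    convert hsplit using 1
    rw [map_map]
    exact map_congr_left fun p hp => (partOf_length_take_drop (hf w p hp) c).symm
end
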